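/- Let 0 < m ≤ M, let n ≥ 1 and b ≥ 0 be integers with 2^b < n. For every finite set S of deterministic online search strategies with |S| ≤ 2^b, there exists a price sequence σ of length n with all prices in [m, M] such that every strategy A ∈ S satisfies max_k σ k ≥ (M/m)^{1/(2^b+1)} · profit(A, σ). (Hence every online algorithm reading b < log₂ n advice bits has competitive ratio at least (M/m)^{1/(2^b+1)}.) -/
import Mathlib


/-- The maximum price of a price sequence of positive length. -/
noncomputable def maxPrice {n : ℕ} (hn : 0 < n) (σ : Fin n → ℝ) : ℝ :=
  Finset.univ.sup' ⟨⟨0, hn⟩, Finset.mem_univ _⟩ σ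

/-- The profit of a deterministic online search strategy `A : List ℝ → Bool`
on the price sequence `σ`: it accepts at the least index `k` such that `A`
applied to the prefix `[σ 0, …, σ k]` is `true`, obtaining `σ k`; if no such
index exists it must accept the last price `σ (n-1)`. -/
noncomputable def osProfit {n : ℕ} (hn : 0 < n) (A : List ℝ → Bool) (σ : Fin n → ℝ) : ℝ :=
  if h : ∃ k : Fin n, A ((List.ofFn σ).take ((k : ℕ) + 1)) = true then
    σ ((Finset.univ.filter (fun k : Fin n => A ((List.ofFn σ).take ((k : ℕ) + 1)) = true)).min'
      (h.imp fun k hk => Finset.mem_filter.mpr ⟨Finset.mem_univ _, hk⟩))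
  else σ ⟨n - 1, Nat.sub_lt hn one_pos⟩

/-- Let `0 < m ≤ M` and `2^b < n`. For every finite set `S` of at
most `2^b` deterministic online search strategies, there is a price sequence `σ`
of length `n` with prices in `[m, M]` on which every `A ∈ S` has competitive
ratio at least `(M/m)^{1/(2^b+1)}`. Hence every online algorithm reading
`b < log₂ n` advice bits has competitive ratio at least `(M/m)^{1/(2^b+1)}`. -/
theorem advice_lower_bound_c_competitive
    (m M : ℝ) (hm : 0 < m) (hmM : m ≤ M)
    (n b : ℕ) (hn : 0 < n) (hbn : 2 ^ b < n)
    (S : Finset (List ℝ → Bool)) (hS : S.card ≤ 2 ^ b) :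
    ∃ σ : Fin n → ℝ, (∀ i, m ≤ σ i ∧ σ i ≤ M) ∧
      ∀ A ∈ S, (M / m) ^ ((1 : ℝ) / (2 ^ b + 1)) * osProfit hn A σ ≤ maxPrice hn σ := by
  classical
  set c : ℝ := (M / m) ^ ((1 : ℝ) / (2 ^ b + 1)) with hc_def
  have hMm : (1 : ℝ) ≤ M / m := (one_le_div hm).mpr hmM
  have hc1 : 1 ≤ c := Real.one_le_rpow hMm (by positivity)
  have hcpow : c ^ (2 ^ b + 1) = M / m := by
    rw [hc_def, ← Real.rpow_natCast _ (2 ^ b + 1), ← Real.rpow_mul (by linarith)]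
    rw [show ((1 : ℝ) / (2 ^ b + 1)) * ((2 ^ b + 1 : ℕ) : ℝ) = 1 by
      push_cast; field_simp]
    exact Real.rpow_one _
  -- the escalating price sequence
  set τ : ℕ → ℝ := fun t => m * c ^ (t + 1) with hτ_def
  set P : (List ℝ → Bool) → ℕ → Prop := fun A t => A ((List.range (t + 1)).map τ) = true
    with hP_def
  set g : (List ℝ → Bool) → ℕ := fun A =>
    if h : ∃ t, P A t then Nat.find h else n with hg_def
  set F : Finset ℕ := S.image g with hF_def
  have hFcard : F.card ≤ 2 ^ b := le_trans (Finset.card_image_le) hS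
  have hex : ∃ t, t ∉ F := by
    by_contra hco
    push_neg at hco
    have hsub : Finset.range (2 ^ b + 1) ⊆ F := fun t _ => hco t
    have := Finset.card_le_card hsub
    rw [Finset.card_range] at this
    omega
  set d : ℕ := Nat.find hex with hd_def
  have hdF : d ∉ F := Nat.find_spec hex
  have hdmin : ∀ s < d, s ∈ F := fun s hs => by
    by_contra hsF
    exact absurd (Nat.find_min' hex hsF) (by omega)
  have hdle : d ≤ 2 ^ b := by
    by_contra hco
    push_neg at hco
    have : Finset.range (2 ^ b + 1) ⊆ F := fun t ht => by
      rw [Finset.mem_range] at ht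
      exact hdmin t (by omega)
    have := Finset.card_le_card this
    rw [Finset.card_range] at this
    omega
  have hdn : d < n := lt_of_le_of_lt hdle hbn
  set σ : Fin n → ℝ := fun i => if (i : ℕ) ≤ d then τ i else m with hσ_def
  -- prefix agreement
  have hpre : ∀ k : ℕ, k ≤ d → (List.ofFn σ).take (k + 1) = (List.range (k + 1)).map τ := by
    intro k hk
    apply List.ext_getElem
    · simp [List.length_take]
      omega
    · intro i h1 h2
      have hik : i < k + 1 := by
        simp [List.length_take] at h1
        omega
      have hin : i < n := by omega
      simp only [List.getElem_take, List.getElem_ofFn, List.getElem_map, List.getElem_range,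
        hσ_def]
      rw [if_pos (by simp; omega : ((⟨i, hin⟩ : Fin n) : ℕ) ≤ d)]
  have hmax : m * c ^ (d + 1) ≤ maxPrice hn σ := by
    have h := Finset.le_sup' σ (Finset.mem_univ (⟨d, hdn⟩ : Fin n))
    rw [maxPrice] at *
    calc m * c ^ (d + 1) = σ ⟨d, hdn⟩ := by
          simp only [hσ_def]
          rw [if_pos (by simp : ((⟨d, hdn⟩ : Fin n) : ℕ) ≤ d)]
      _ ≤ _ := h
  have hmono : ∀ i j : ℕ, i ≤ j → m * c ^ i ≤ m * c ^ j := fun i j hij => by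
    apply mul_le_mul_of_nonneg_left (pow_le_pow_right₀ hc1 hij) hm.le
  have hcm : c * m ≤ maxPrice hn σ := by
    calc c * m = m * c ^ 1 := by ring
      _ ≤ m * c ^ (d + 1) := hmono 1 (d + 1) (by omega)
      _ ≤ _ := hmax
  refine ⟨σ, ?_, ?_⟩
  · intro i
    constructor
    · simp only [hσ_def]
      by_cases h : (i : ℕ) ≤ d
      · rw [if_pos h]
        have h1 : (1:ℝ) ≤ c ^ ((i:ℕ) + 1) := one_le_pow₀ hc1
        calc m = m * 1 := by ring
          _ ≤ m * c ^ ((i:ℕ)+1) := by nlinarith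
          _ = τ (i:ℕ) := rfl
      · rw [if_neg h]
    · simp only [hσ_def]
      by_cases h : (i : ℕ) ≤ d
      · rw [if_pos h]
        have h1 : c ^ ((i:ℕ) + 1) ≤ c ^ (2 ^ b + 1) := pow_le_pow_right₀ hc1 (by omega)
        calc τ (i:ℕ) = m * c ^ ((i:ℕ)+1) := rfl
          _ ≤ m * c ^ (2^b+1) := by nlinarith
          _ = m * (M/m) := by rw [hcpow]
          _ = M := by field_simp
      · rw [if_neg h]; linarith
  · intro A hA
    rw [osProfit]
    split_ifs with h
    · set k := (Finset.univ.filter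
        (fun k : Fin n => A ((List.ofFn σ).take ((k : ℕ) + 1)) = true)).min'
        (h.imp fun k hk => Finset.mem_filter.mpr ⟨Finset.mem_univ _, hk⟩) with hk_def
      have hkmem := Finset.min'_mem (Finset.univ.filter
        (fun k : Fin n => A ((List.ofFn σ).take ((k : ℕ) + 1)) = true))
        (h.imp fun k hk => Finset.mem_filter.mpr ⟨Finset.mem_univ _, hk⟩)
      rw [Finset.mem_filter] at hkmem
      have hkA : A ((List.ofFn σ).take ((k : ℕ) + 1)) = true := hkmem.2
      rcases le_or_gt (k : ℕ) d with hkd | hkd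
      · -- accepted at high price
        have hPk : P A (k : ℕ) := by simp only [hP_def]; rw [← hpre _ hkd]; exact hkA
        have hPex : ∃ t, P A t := ⟨_, hPk⟩
        have hjk : Nat.find hPex ≤ (k : ℕ) := Nat.find_min' hPex hPk
        have hjd : Nat.find hPex ≤ d := le_trans hjk hkd
        have hjn : Nat.find hPex < n := lt_of_le_of_lt hjd hdn
        have hjA : A ((List.ofFn σ).take (Nat.find hPex + 1)) = true := by
          rw [hpre _ hjd]; exact Nat.find_spec hPex
        have hkj : (k : ℕ) ≤ Nat.find hPex := by
          have := Finset.min'_le (Finset.univ.filter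
            (fun k : Fin n => A ((List.ofFn σ).take ((k : ℕ) + 1)) = true))
            ⟨Nat.find hPex, hjn⟩ (Finset.mem_filter.mpr ⟨Finset.mem_univ _, hjA⟩)
          rw [← hk_def, Fin.le_def] at this
          exact this
        have hkeq : (k : ℕ) = Nat.find hPex := le_antisymm hkj hjk
        have hgA : g A = Nat.find hPex := by simp only [hg_def]; rw [dif_pos hPex]
        have hkF : (k : ℕ) ∈ F := by
          rw [hF_def]
          exact Finset.mem_image.mpr ⟨A, hA, by rw [hgA]; omega⟩
        have hklt : (k : ℕ) < d := lt_of_le_of_ne hkd (fun he => hdF (he ▸ hkF))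
        have hσk : σ k = m * c ^ ((k : ℕ) + 1) := by
          simp only [hσ_def]; rw [if_pos hkd]
        rw [hσk]
        calc c * (m * c ^ ((k:ℕ) + 1)) = m * c ^ ((k:ℕ) + 2) := by ring
          _ ≤ m * c ^ (d + 1) := hmono _ _ (by omega)
          _ ≤ _ := hmax
      · -- accepted at price m
        have hσk : σ k = m := by simp only [hσ_def]; rw [if_neg (by omega : ¬ (k:ℕ) ≤ d)]
        rw [hσk]
        exact hcm
    · -- never accepts
      rcases lt_or_ge d (n - 1) with hdn1 | hdn1
      · have : σ ⟨n - 1, Nat.sub_lt hn one_pos⟩ = m := by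
          simp only [hσ_def]
          rw [if_neg (by simp; omega : ¬ ((⟨n - 1, Nat.sub_lt hn one_pos⟩ : Fin n) : ℕ) ≤ d)]
        rw [this]
        exact hcm
      · exfalso
        have hdeq : d = n - 1 := by omega
        -- g A > d
        have hgAd : g A ∉ Finset.range d ∧ g A ≠ d := by
          simp only [hg_def]
          split_ifs with h'
          · constructor
            · intro hmem
              rw [Finset.mem_range] at hmem
              have hjd : Nat.find h' ≤ d := le_of_lt hmem
              have hjn : Nat.find h' < n := lt_of_le_of_lt hjd hdn
              exact h ⟨⟨Nat.find h', hjn⟩, by rw [hpre _ hjd]; exact Nat.find_spec h'⟩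
            · intro he
              apply hdF
              rw [hF_def]
              exact Finset.mem_image.mpr ⟨A, hA, by simp only [hg_def]; simp only [dif_pos h']; omega⟩
          · constructor
            · intro hmem; rw [Finset.mem_range] at hmem; omega
            · omega
        have hsub : insert (g A) (Finset.range d) ⊆ F := by
          intro t ht
          rcases Finset.mem_insert.mp ht with ht | ht
          · rw [ht, hF_def]; exact Finset.mem_image.mpr ⟨A, hA, rfl⟩
          · exact hdmin t (Finset.mem_range.mp ht)
        have hcard := Finset.card_le_card hsub
        rw [Finset.card_insert_of_notMem hgAd.1, Finset.card_range] at hcard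
        have : 2 ^ b ≤ d := by omega
        omega
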